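/- arXiv:1311.4296 — 4 statements merged into one kernel-verified Lean document; each statement's English description precedes it below -/
import Mathlib

section
/- Let F be a submodular function on V with F(∅) = 0 and f its Lovász extension, and for each i ∈ V let h_i : ℝ → ℝ be strictly convex and continuously differentiable with sup_{λ∈ℝ} h_i'(λ) = +∞ and inf_{λ∈ℝ} h_i'(λ) = −∞. Then f(x) + Σ_{i∈V} h_i(x_i) has a unique minimizer x* over ℝ^V, and for every j ∈ V, x*_j = sup { λ ∈ ℝ : there exists a minimizer S of T ↦ F(T) + Σ_{i∈T} h_i'(λ) with j ∈ S }, and this supremum is attained. -/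
/-!
For every level `λ` the set function `T ↦ F T + ∑ i ∈ T, h' i λ` is submodular, so its minimizers
are closed under union, and since each `h' i` is strictly increasing its minimizers shrink as `λ`
grows. The set of levels at which `j` lies in a minimizer is closed, bounded above and nonempty;
let `x* j` be its maximum. Then `{j | λ ≤ x* j}` is the largest minimizer at level `λ` and, by
continuity in `λ`, `{j | λ < x* j}` is a minimizer as well. Comparing the two shows that
`y = -h'(x*)` lies in the base polytope of `F` and is tight on every level set of `x*`; by Abel
summation along a sorting permutation, `⟨y, x⟩ ≤ f x` for all `x`, with equality at `x*`. As each
`h i` lies strictly above its tangent at `x* i`, `f x + ∑ h i (x i) > f x* + ∑ h i (x* i)`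
whenever `x ≠ x*`.
-/

open Finset
open Finset

def Submodular {n : ℕ} (F : Finset (Fin n) → ℝ) : Prop :=
  ∀ S T : Finset (Fin n), F (S ∪ T) + F (S ∩ T) ≤ F S + F T

def basePolytope {n : ℕ} (F : Finset (Fin n) → ℝ) : Set (Fin n → ℝ) :=
  {y | (∀ S : Finset (Fin n), ∑ i ∈ S, y i ≤ F S) ∧ ∑ i, y i = F Finset.univ}

def SortsDesc {n : ℕ} (x : Fin n → ℝ) (σ : Equiv.Perm (Fin n)) : Prop :=
  ∀ j k : Fin n, j ≤ k → x (σ k) ≤ x (σ j)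

def lovaszVal {n : ℕ} (F : Finset (Fin n) → ℝ) (x : Fin n → ℝ) (σ : Equiv.Perm (Fin n)) : ℝ :=
  ∑ k : Fin n, x (σ k) *
    (F ((Finset.univ.filter (fun j => j ≤ k)).image ⇑σ)
      - F ((Finset.univ.filter (fun j => j < k)).image ⇑σ))

def IsLovasz {n : ℕ} (F : Finset (Fin n) → ℝ) (f : (Fin n → ℝ) → ℝ) : Prop :=
  ∀ (x : Fin n → ℝ) (σ : Equiv.Perm (Fin n)), SortsDesc x σ → f x = lovaszVal F x σ

open Topology

variable {n : ℕ}

def IsParamMin (F : Finset (Fin n) → ℝ) (h' : Fin n → ℝ → ℝ) (lam : ℝ) (S : Finset (Fin n)) :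
    Prop :=
  ∀ T : Finset (Fin n), F S + ∑ i ∈ S, h' i lam ≤ F T + ∑ i ∈ T, h' i lam

def paramLevels (F : Finset (Fin n) → ℝ) (h' : Fin n → ℝ → ℝ) (j : Fin n) : Set ℝ :=
  {lam | ∃ S : Finset (Fin n), j ∈ S ∧ IsParamMin F h' lam S}

section ParametricMinimizers

variable {F : Finset (Fin n) → ℝ} {h' : Fin n → ℝ → ℝ} {lam mu : ℝ} {S T : Finset (Fin n)}
  {j : Fin n}

lemma exists_isParamMin (F : Finset (Fin n) → ℝ) (h' : Fin n → ℝ → ℝ) (lam : ℝ) :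
    ∃ S, IsParamMin F h' lam S := by
  obtain ⟨S, -, hS⟩ := exists_min_image univ (fun S => F S + ∑ i ∈ S, h' i lam) univ_nonempty
  exact ⟨S, fun T => hS T (mem_univ T)⟩

lemma IsParamMin.union (hF : Submodular F) (hS : IsParamMin F h' lam S)
    (hT : IsParamMin F h' lam T) : IsParamMin F h' lam (S ∪ T) := by
  intro X
  have := hF S T
  have := hS (S ∩ T)
  have := hT X
  have := sum_union_inter (s₁ := S) (s₂ := T) (f := fun i => h' i lam)
  linarith

lemma exists_isParamMin_maximum (hF : Submodular F) (lam : ℝ) :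
    ∃ M, IsParamMin F h' lam M ∧ ∀ S, IsParamMin F h' lam S → S ⊆ M := by
  classical
  obtain ⟨S₀, hS₀⟩ := exists_isParamMin F h' lam
  have hne : (univ.filter (IsParamMin F h' lam)).Nonempty := ⟨S₀, by simpa using hS₀⟩
  exact ⟨_, sup'_induction hne id (fun _ hS _ hT => hS.union hF hT) fun S hS => (mem_filter.1 hS).2,
    fun S hS => le_sup' id (by simpa using hS)⟩

lemma IsParamMin.subset_of_lt (hF : Submodular F) (hmono : ∀ i, StrictMono (h' i))
    (hlt : lam < mu) (hS : IsParamMin F h' lam S) (hT : IsParamMin F h' mu T) : T ⊆ S := by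
  by_contra hTS
  have hne : (T \ S).Nonempty := by rwa [sdiff_nonempty]
  have hgain : ∑ i ∈ T \ S, h' i lam < ∑ i ∈ T \ S, h' i mu :=
    sum_lt_sum_of_nonempty hne fun i _ => hmono i hlt
  have := hF S T
  have := hS (S ∪ T)
  have := hT (S ∩ T)
  have := sum_union_inter (s₁ := S) (s₂ := T) (f := fun i => h' i lam)
  have := sum_inter_add_sum_sdiff T S (fun i => h' i lam)
  have := sum_inter_add_sum_sdiff T S (fun i => h' i mu)
  rw [inter_comm T S] at *
  linarith

lemma IsParamMin.sub_eq_neg_sum (hS : IsParamMin F h' lam S) (hT : IsParamMin F h' lam T)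
    (hTS : T ⊆ S) : F S - F T = -∑ i ∈ S \ T, h' i lam := by
  have := hS T
  have := hT S
  have := sum_sdiff hTS (f := fun i => h' i lam)
  linarith

lemma IsParamMin.le_sub_of_mem (hS : IsParamMin F h' lam S) (hj : j ∈ S) :
    h' j lam ≤ F (S.erase j) - F S := by
  have := hS (S.erase j)
  have := sum_erase_add S (fun i => h' i lam) hj
  linarith

lemma IsParamMin.mem_of_lt_sub (hS : IsParamMin F h' lam S)
    (hj : h' j lam < F S - F (insert j S)) : j ∈ S := by
  by_contra hjS
  have := hS (insert j S)
  rw [sum_insert hjS] at this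
  linarith

lemma isClosed_setOf_isParamMin (hcont : ∀ i, Continuous (h' i)) (S : Finset (Fin n)) :
    IsClosed {lam | IsParamMin F h' lam S} := by
  have hobj : ∀ T : Finset (Fin n), Continuous fun lam => F T + ∑ i ∈ T, h' i lam :=
    fun T => continuous_const.add (continuous_finsetSum T fun i _ => hcont i)
  simp only [IsParamMin, Set.ofPred_forall]
  exact isClosed_iInter fun T => isClosed_le (hobj S) (hobj T)

end ParametricMinimizers

section MaximalLevels

variable {F : Finset (Fin n) → ℝ} {h' : Fin n → ℝ → ℝ} {j : Fin n}

lemma isClosed_paramLevels (hcont : ∀ i, Continuous (h' i)) (j : Fin n) :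
    IsClosed (paramLevels F h' j) := by
  have : paramLevels F h' j =
      ⋃ (S : Finset (Fin n)) (_ : j ∈ S), {lam | IsParamMin F h' lam S} := by
    ext lam
    simp [paramLevels]
  rw [this]
  exact isClosed_iUnion_of_finite fun S =>
    isClosed_iUnion_of_finite fun _ => isClosed_setOf_isParamMin hcont S

lemma bddAbove_paramLevels (hmono : StrictMono (h' j)) (htop : ∀ M, ∃ t, M ≤ h' j t) :
    BddAbove (paramLevels F h' j) := by
  obtain ⟨M, hM⟩ := Finite.bddAbove_range fun S : Finset (Fin n) => F (S.erase j) - F S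
  obtain ⟨t, ht⟩ := htop (M + 1)
  refine ⟨t, fun lam ⟨S, hjS, hS⟩ => (hmono.lt_iff_lt.1 ?_).le⟩
  linarith [hS.le_sub_of_mem hjS, hM ⟨S, rfl⟩]

lemma paramLevels_nonempty (hbot : ∀ M, ∃ t, h' j t ≤ M) : (paramLevels F h' j).Nonempty := by
  obtain ⟨m, hm⟩ := Finite.bddBelow_range fun S : Finset (Fin n) => F S - F (insert j S)
  obtain ⟨t, ht⟩ := hbot (m - 1)
  obtain ⟨S, hS⟩ := exists_isParamMin F h' t
  exact ⟨t, S, hS.mem_of_lt_sub (by linarith [hm ⟨S, rfl⟩]), hS⟩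

lemma exists_isGreatest_paramLevels (hcont : ∀ i, Continuous (h' i)) (hmono : StrictMono (h' j))
    (htop : ∀ M, ∃ t, M ≤ h' j t) (hbot : ∀ M, ∃ t, h' j t ≤ M) :
    ∃ x, IsGreatest (paramLevels F h' j) x :=
  ⟨_, (isClosed_paramLevels hcont j).isGreatest_csSup (paramLevels_nonempty hbot)
    (bddAbove_paramLevels hmono htop)⟩

end MaximalLevels

noncomputable def levelSet (x : Fin n → ℝ) (lam : ℝ) : Finset (Fin n) :=
  univ.filter (lam ≤ x ·)

noncomputable def strictLevelSet (x : Fin n → ℝ) (lam : ℝ) : Finset (Fin n) :=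
  univ.filter (lam < x ·)

@[simp] lemma mem_levelSet {x : Fin n → ℝ} {lam : ℝ} {j : Fin n} :
    j ∈ levelSet x lam ↔ lam ≤ x j := by
  simp [levelSet]

@[simp] lemma mem_strictLevelSet {x : Fin n → ℝ} {lam : ℝ} {j : Fin n} :
    j ∈ strictLevelSet x lam ↔ lam < x j := by
  simp [strictLevelSet]

lemma eventually_levelSet_eq_strictLevelSet (x : Fin n → ℝ) (lam : ℝ) :
    ∀ᶠ mu in 𝓝[>] lam, levelSet x mu = strictLevelSet x lam := by
  have : ∀ j, ∀ᶠ mu in 𝓝[>] lam, (mu ≤ x j ↔ lam < x j) := by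
    intro j
    by_cases hj : lam < x j
    · filter_upwards [Ioo_mem_nhdsGT hj] with mu hmu
      simp [hmu.2.le, hj]
    · filter_upwards [self_mem_nhdsWithin] with mu (hmu : lam < mu)
      simp only [hj, iff_false, not_le]
      exact (not_lt.1 hj).trans_lt hmu
  filter_upwards [Filter.eventually_all.2 this] with mu hmu
  ext j
  simp [hmu j]

section SolutionLevelSets

variable {F : Finset (Fin n) → ℝ} {h' : Fin n → ℝ → ℝ} {x : Fin n → ℝ} {lam : ℝ} {j : Fin n}

lemma mem_paramLevels_iff (hF : Submodular F) (hmono : ∀ i, StrictMono (h' i))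
    (hx : ∀ j, IsGreatest (paramLevels F h' j) (x j)) :
    lam ∈ paramLevels F h' j ↔ lam ≤ x j := by
  refine ⟨fun hlam => (hx j).2 hlam, fun hle => ?_⟩
  rcases hle.eq_or_lt with rfl | hlt
  · exact (hx j).1
  obtain ⟨T, hjT, hT⟩ := (hx j).1
  obtain ⟨S, hS⟩ := exists_isParamMin F h' lam
  exact ⟨S, hS.subset_of_lt hF hmono hlt hT hjT, hS⟩

lemma isParamMin_levelSet (hF : Submodular F) (hmono : ∀ i, StrictMono (h' i))
    (hx : ∀ j, IsGreatest (paramLevels F h' j) (x j)) (lam : ℝ) :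
    IsParamMin F h' lam (levelSet x lam) := by
  obtain ⟨M, hM, hmax⟩ := exists_isParamMin_maximum (h' := h') hF lam
  convert hM using 1
  ext j
  rw [mem_levelSet, ← mem_paramLevels_iff hF hmono hx]
  exact ⟨fun ⟨S, hjS, hS⟩ => hmax S hS hjS, fun hjM => ⟨M, hjM, hM⟩⟩

lemma isParamMin_strictLevelSet (hF : Submodular F) (hmono : ∀ i, StrictMono (h' i))
    (hcont : ∀ i, Continuous (h' i)) (hx : ∀ j, IsGreatest (paramLevels F h' j) (x j))
    (lam : ℝ) : IsParamMin F h' lam (strictLevelSet x lam) :=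
  (isClosed_setOf_isParamMin hcont _).mem_of_tendsto
    (tendsto_nhdsWithin_of_tendsto_nhds Filter.tendsto_id)
    ((eventually_levelSet_eq_strictLevelSet x lam).mono fun mu hmu =>
      hmu ▸ isParamMin_levelSet hF hmono hx mu)

end SolutionLevelSets

section DualVector

variable {F : Finset (Fin n) → ℝ} {h' : Fin n → ℝ → ℝ} {x : Fin n → ℝ}

/-- Both level sets minimize at level `lam`, and `x = lam` on their difference. -/
lemma sum_neg_deriv_levelSet_sub_eq (hF : Submodular F) (hmono : ∀ i, StrictMono (h' i))
    (hcont : ∀ i, Continuous (h' i)) (hx : ∀ j, IsGreatest (paramLevels F h' j) (x j))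
    (lam : ℝ) :
    ∑ i ∈ levelSet x lam, -h' i (x i) - F (levelSet x lam) =
      ∑ i ∈ strictLevelSet x lam, -h' i (x i) - F (strictLevelSet x lam) := by
  have hsub : strictLevelSet x lam ⊆ levelSet x lam := fun i hi =>
    mem_levelSet.2 (mem_strictLevelSet.1 hi).le
  have hdiff := (isParamMin_levelSet hF hmono hx lam).sub_eq_neg_sum
    (isParamMin_strictLevelSet hF hmono hcont hx lam) hsub
  have hlayer : ∑ i ∈ levelSet x lam \ strictLevelSet x lam, -h' i (x i) =
      -∑ i ∈ levelSet x lam \ strictLevelSet x lam, h' i lam := by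
    rw [← sum_neg_distrib]
    refine sum_congr rfl fun i hi => ?_
    simp only [mem_sdiff, mem_levelSet, mem_strictLevelSet, not_lt] at hi
    rw [le_antisymm hi.2 hi.1]
  have := sum_sdiff hsub (f := fun i => -h' i (x i))
  linarith

lemma sum_neg_deriv_levelSet_eq (hF0 : F ∅ = 0) (hF : Submodular F)
    (hmono : ∀ i, StrictMono (h' i)) (hcont : ∀ i, Continuous (h' i))
    (hx : ∀ j, IsGreatest (paramLevels F h' j) (x j))
    (lam : ℝ) : ∑ i ∈ levelSet x lam, -h' i (x i) = F (levelSet x lam) := by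
  suffices ∀ S lam, levelSet x lam = S → ∑ i ∈ S, -h' i (x i) = F S from this _ lam rfl
  intro S
  induction S using Finset.strongInduction with
  | H S ih =>
  intro lam hS
  rcases S.eq_empty_or_nonempty with rfl | hne
  · simp [hF0]
  obtain ⟨i₀, hi₀, hmin⟩ := S.exists_min_image x hne
  have hS₀ : levelSet x (x i₀) = S := by
    subst hS
    ext j
    simp only [mem_levelSet] at hi₀ ⊢
    exact ⟨hi₀.trans, fun hj => hmin j (mem_levelSet.2 hj)⟩
  have hlt : strictLevelSet x (x i₀) ⊂ S := by
    rw [← hS₀]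
    refine ssubset_iff_of_subset (fun i hi => ?_) |>.2 ⟨i₀, by simp, by simp⟩
    exact mem_levelSet.2 (mem_strictLevelSet.1 hi).le
  obtain ⟨mu, hmu⟩ := (eventually_levelSet_eq_strictLevelSet x (x i₀)).exists
  have := ih _ hlt mu hmu
  have := sum_neg_deriv_levelSet_sub_eq hF hmono hcont hx (x i₀)
  rw [hS₀] at this
  linarith

lemma sum_neg_deriv_le (hF0 : F ∅ = 0) (hF : Submodular F)
    (hmono : ∀ i, StrictMono (h' i)) (hcont : ∀ i, Continuous (h' i))
    (hx : ∀ j, IsGreatest (paramLevels F h' j) (x j))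
    (A : Finset (Fin n)) : ∑ i ∈ A, -h' i (x i) ≤ F A := by
  induction A using Finset.strongInduction with
  | H A ih =>
  rcases A.eq_empty_or_nonempty with rfl | hne
  · simp [hF0]
  -- Split off the layer of `A` where `x` is smallest and compare `A` with the minimizer `G`.
  obtain ⟨i₀, hi₀, hmin⟩ := A.exists_min_image x hne
  set G := strictLevelSet x (x i₀) with hG
  have hlt : A ∩ G ⊂ A := ssubset_iff_of_subset inter_subset_left |>.2 ⟨i₀, hi₀, by simp [hG]⟩
  have hbottom : ∑ i ∈ A \ G, -h' i (x i) = -∑ i ∈ A \ G, h' i (x i₀) := by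
    rw [← sum_neg_distrib]
    refine sum_congr rfl fun i hi => ?_
    simp only [hG, mem_sdiff, mem_strictLevelSet, not_lt] at hi
    rw [le_antisymm hi.2 (hmin i hi.1)]
  have hGmin := isParamMin_strictLevelSet hF hmono hcont hx (x i₀) (A ∪ G)
  have hunion := sum_sdiff (subset_union_right (s₁ := A) (s₂ := G)) (f := fun i => h' i (x i₀))
  rw [union_sdiff_right] at hunion
  have := hF A G
  have := ih _ hlt
  have := sum_inter_add_sum_sdiff A G (fun i => -h' i (x i))
  linarith

lemma neg_deriv_mem_basePolytope (hF0 : F ∅ = 0) (hF : Submodular F)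
    (hmono : ∀ i, StrictMono (h' i)) (hcont : ∀ i, Continuous (h' i))
    (hx : ∀ j, IsGreatest (paramLevels F h' j) (x j)) :
    (fun i => -h' i (x i)) ∈ basePolytope F := by
  refine ⟨sum_neg_deriv_le hF0 hF hmono hcont hx, ?_⟩
  obtain ⟨m, hm⟩ := Finite.bddBelow_range x
  have huniv : levelSet x m = univ := eq_univ_of_forall fun i => mem_levelSet.2 (hm ⟨i, rfl⟩)
  simpa [huniv] using sum_neg_deriv_levelSet_eq hF0 hF hmono hcont hx m

end DualVector

lemma sum_range_mul_sub_of_eq_zero (a d : ℕ → ℝ) (m : ℕ) (h0 : d 0 = 0) (hm : d m = 0) :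
    ∑ k ∈ range m, a k * (d (k + 1) - d k) =
      ∑ k ∈ range (m - 1), (a k - a (k + 1)) * d (k + 1) := by
  have := sum_range_by_parts a (fun k => d (k + 1) - d k) m
  simp only [sum_range_sub, h0, hm, sub_zero, smul_eq_mul, mul_zero, zero_sub,
    ← sum_neg_distrib] at this
  exact this.trans (sum_congr rfl fun k _ => by ring)

section LovaszExtension

variable {F : Finset (Fin n) → ℝ} {x y : Fin n → ℝ} {σ : Equiv.Perm (Fin n)}

def initialSeg (σ : Equiv.Perm (Fin n)) (k : ℕ) : Finset (Fin n) :=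
  (univ.filter fun j : Fin n => (j : ℕ) < k).image σ

/-- The value `0` past the end is never used. -/
def sortedVal (x : Fin n → ℝ) (σ : Equiv.Perm (Fin n)) (k : ℕ) : ℝ :=
  if h : k < n then x (σ ⟨k, h⟩) else 0

lemma mem_initialSeg {k : ℕ} {j : Fin n} : j ∈ initialSeg σ k ↔ (σ.symm j : ℕ) < k := by
  simp only [initialSeg, mem_image, mem_filter, mem_univ, true_and]
  exact ⟨by rintro ⟨i, hi, rfl⟩; simpa using hi, fun h => ⟨σ.symm j, h, by simp⟩⟩

lemma sum_initialSeg_succ (g : Fin n → ℝ) (k : Fin n) :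
    ∑ i ∈ initialSeg σ (k + 1), g i = ∑ i ∈ initialSeg σ k, g i + g (σ k) := by
  have : initialSeg σ (k + 1) = insert (σ k) (initialSeg σ k) := by
    ext j
    rw [mem_insert, mem_initialSeg, mem_initialSeg, ← Equiv.symm_apply_eq, Fin.ext_iff]
    omega
  rw [this, sum_insert (by simp [mem_initialSeg]), add_comm]

lemma lovaszVal_eq_sum_range :
    lovaszVal F x σ =
      ∑ k ∈ range n, sortedVal x σ k * (F (initialSeg σ (k + 1)) - F (initialSeg σ k)) := by
  rw [lovaszVal, ← Fin.sum_univ_eq_sum_range]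
  refine sum_congr rfl fun k _ => ?_
  have hle : (univ.filter fun j => j ≤ k).image σ = initialSeg σ (k + 1) := by
    simp only [initialSeg, Fin.le_def, Nat.lt_succ_iff]
  have hlt : (univ.filter fun j => j < k).image σ = initialSeg σ k := by
    simp only [initialSeg, Fin.lt_def]
  rw [hle, hlt, sortedVal, dif_pos k.isLt]

lemma sum_mul_eq_sum_range :
    ∑ i, y i * x i =
      ∑ k ∈ range n, sortedVal x σ k *
        (∑ i ∈ initialSeg σ (k + 1), y i - ∑ i ∈ initialSeg σ k, y i) := by
  rw [← Equiv.sum_comp σ, ← Fin.sum_univ_eq_sum_range]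
  refine sum_congr rfl fun k _ => ?_
  rw [sum_initialSeg_succ, sortedVal, dif_pos k.isLt]
  ring

lemma lovaszVal_sub_sum_mul (hF0 : F ∅ = 0) (huniv : ∑ i, y i = F univ) :
    lovaszVal F x σ - ∑ i, y i * x i =
      ∑ k ∈ range (n - 1), (sortedVal x σ k - sortedVal x σ (k + 1)) *
        (F (initialSeg σ (k + 1)) - ∑ i ∈ initialSeg σ (k + 1), y i) := by
  have h0 : initialSeg σ 0 = ∅ := by ext j; simp [mem_initialSeg]
  have hn : initialSeg σ n = univ := eq_univ_of_forall fun j => mem_initialSeg.2 (σ.symm j).isLt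
  rw [lovaszVal_eq_sum_range, sum_mul_eq_sum_range, ← sum_sub_distrib,
    ← sum_range_mul_sub_of_eq_zero _ (fun k => F (initialSeg σ k) - ∑ i ∈ initialSeg σ k, y i) n
      (by simp [h0, hF0]) (by simp [hn, huniv])]
  exact sum_congr rfl fun k _ => by ring

lemma sortedVal_succ_le (hσ : SortsDesc x σ) {k : ℕ} (hk : k + 1 < n) :
    sortedVal x σ (k + 1) ≤ sortedVal x σ k := by
  rw [sortedVal, sortedVal, dif_pos hk, dif_pos (Nat.lt_of_succ_lt hk)]
  exact hσ ⟨k, _⟩ ⟨k + 1, hk⟩ (Fin.le_def.2 k.le_succ)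

lemma initialSeg_succ_eq_levelSet (hσ : SortsDesc x σ) {k : ℕ} (hk : k + 1 < n)
    (hlt : sortedVal x σ (k + 1) < sortedVal x σ k) :
    initialSeg σ (k + 1) = levelSet x (sortedVal x σ k) := by
  rw [sortedVal, sortedVal, dif_pos hk, dif_pos (Nat.lt_of_succ_lt hk)] at hlt
  rw [sortedVal, dif_pos (Nat.lt_of_succ_lt hk)]
  ext j
  rw [mem_initialSeg, mem_levelSet]
  constructor
  · intro hj
    simpa using hσ (σ.symm j) ⟨k, _⟩ (Fin.le_def.2 (Nat.lt_succ_iff.1 hj))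
  · intro hj
    by_contra hge
    have := hσ ⟨k + 1, hk⟩ (σ.symm j) (Fin.le_def.2 (not_lt.1 hge))
    simp only [Equiv.apply_symm_apply] at this
    linarith

lemma sum_mul_le_lovaszVal (hF0 : F ∅ = 0) (hy : y ∈ basePolytope F) (hσ : SortsDesc x σ) :
    ∑ i, y i * x i ≤ lovaszVal F x σ := by
  refine sub_nonneg.1 ((lovaszVal_sub_sum_mul hF0 hy.2).symm ▸ sum_nonneg fun k hk => ?_)
  have hk : k + 1 < n := by rw [mem_range] at hk; omega
  exact mul_nonneg (sub_nonneg.2 (sortedVal_succ_le hσ hk)) (sub_nonneg.2 (hy.1 _))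

lemma sum_mul_eq_lovaszVal (hF0 : F ∅ = 0) (huniv : ∑ i, y i = F univ)
    (htight : ∀ lam, ∑ i ∈ levelSet x lam, y i = F (levelSet x lam)) (hσ : SortsDesc x σ) :
    ∑ i, y i * x i = lovaszVal F x σ := by
  refine (sub_eq_zero.1 ((lovaszVal_sub_sum_mul hF0 huniv).trans (sum_eq_zero fun k hk => ?_))).symm
  have hk : k + 1 < n := by rw [mem_range] at hk; omega
  rcases (sortedVal_succ_le hσ hk).eq_or_lt with heq | hlt
  · rw [heq, sub_self, zero_mul]
  · rw [initialSeg_succ_eq_levelSet hσ hk hlt, htight, sub_self, mul_zero]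

lemma exists_sortsDesc (x : Fin n → ℝ) : ∃ σ, SortsDesc x σ :=
  ⟨Tuple.sort (-x), fun _ _ hjk => neg_le_neg_iff.1 (Tuple.monotone_sort (-x) hjk)⟩

lemma IsLovasz.sum_mul_le {f : (Fin n → ℝ) → ℝ} (hf : IsLovasz F f) (hF0 : F ∅ = 0)
    (hy : y ∈ basePolytope F) (x : Fin n → ℝ) : ∑ i, y i * x i ≤ f x := by
  obtain ⟨σ, hσ⟩ := exists_sortsDesc x
  exact hf x σ hσ ▸ sum_mul_le_lovaszVal hF0 hy hσ

lemma IsLovasz.eq_sum_mul {f : (Fin n → ℝ) → ℝ} (hf : IsLovasz F f) (hF0 : F ∅ = 0)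
    (huniv : ∑ i, y i = F univ) (htight : ∀ lam, ∑ i ∈ levelSet x lam, y i = F (levelSet x lam)) :
    f x = ∑ i, y i * x i := by
  obtain ⟨σ, hσ⟩ := exists_sortsDesc x
  rw [hf x σ hσ, sum_mul_eq_lovaszVal hF0 huniv htight hσ]

end LovaszExtension

lemma StrictConvexOn.strictMono_of_hasDerivAt {g g' : ℝ → ℝ} (hg : StrictConvexOn ℝ Set.univ g)
    (hd : ∀ t, HasDerivAt g (g' t) t) : StrictMono g' := fun s t hst =>
  (hg.lt_slope_of_hasDerivAt (Set.mem_univ s) (Set.mem_univ t) hst (hd s)).trans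
    (hg.slope_lt_of_hasDerivAt (Set.mem_univ s) (Set.mem_univ t) hst (hd t))

lemma StrictConvexOn.sub_mul_lt_of_hasDerivAt {g : ℝ → ℝ} {d s t : ℝ}
    (hg : StrictConvexOn ℝ Set.univ g) (hd : HasDerivAt g d s) (hts : t ≠ s) :
    g s - d * s < g t - d * t := by
  rcases hts.lt_or_gt with hlt | hlt
  · have := hg.slope_lt_of_hasDerivAt (Set.mem_univ t) (Set.mem_univ s) hlt hd
    rw [slope_def_field, div_lt_iff₀ (sub_pos.2 hlt)] at this
    linarith
  · have := hg.lt_slope_of_hasDerivAt (Set.mem_univ s) (Set.mem_univ t) hlt hd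
    rw [slope_def_field, lt_div_iff₀ (sub_pos.2 hlt)] at this
    linarith

lemma IsLovasz.add_sum_lt_of_ne {F : Finset (Fin n) → ℝ} {f : (Fin n → ℝ) → ℝ}
    (hf : IsLovasz F f) (hF0 : F ∅ = 0) {h h' : Fin n → ℝ → ℝ}
    (hconv : ∀ i, StrictConvexOn ℝ Set.univ (h i)) (hderiv : ∀ i t, HasDerivAt (h i) (h' i t) t)
    {xs x : Fin n → ℝ} (hy : (fun i => -h' i (xs i)) ∈ basePolytope F)
    (hfxs : f xs = ∑ i, -h' i (xs i) * xs i) (hne : x ≠ xs) :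
    f xs + ∑ i, h i (xs i) < f x + ∑ i, h i (x i) := by
  obtain ⟨i₀, hi₀⟩ := Function.ne_iff.1 hne
  have hcoord : ∀ i, h i (xs i) - h' i (xs i) * xs i ≤ h i (x i) - h' i (xs i) * x i := by
    intro i
    rcases eq_or_ne (x i) (xs i) with heq | hne
    · rw [heq]
    · exact ((hconv i).sub_mul_lt_of_hasDerivAt (hderiv i (xs i)) hne).le
  calc f xs + ∑ i, h i (xs i) = ∑ i, (h i (xs i) - h' i (xs i) * xs i) := by
        rw [hfxs, sum_sub_distrib]
        simp only [neg_mul, sum_neg_distrib]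
        ring
    _ < ∑ i, (h i (x i) - h' i (xs i) * x i) :=
        sum_lt_sum (fun i _ => hcoord i)
          ⟨i₀, mem_univ _, (hconv i₀).sub_mul_lt_of_hasDerivAt (hderiv i₀ (xs i₀)) hi₀⟩
    _ ≤ f x + ∑ i, h i (x i) := by
        have := hf.sum_mul_le hF0 hy x
        simp only [neg_mul, sum_neg_distrib] at this
        rw [sum_sub_distrib]
        linarith

/-- Proposition: characterization of the proximal solution:
`f(x) + Σ_i h_i(x_i)` has a unique minimizer `x*`, and each coordinate satisfies
`x*_j = max {λ : ∃ minimizer S of T ↦ F(T) + Σ_{i∈T} h_i'(λ) with j ∈ S}`,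
the supremum being attained. -/
theorem statement11 {n : ℕ} (F : Finset (Fin n) → ℝ) (hF0 : F ∅ = 0) (hF : Submodular F)
    (f : (Fin n → ℝ) → ℝ) (hf : IsLovasz F f)
    (h h' : Fin n → ℝ → ℝ)
    (hconv : ∀ i, StrictConvexOn ℝ (Set.univ : Set ℝ) (h i))
    (hderiv : ∀ i t, HasDerivAt (h i) (h' i t) t)
    (hcont : ∀ i, Continuous (h' i))
    (hsupTop : ∀ i M, ∃ t, M ≤ h' i t)
    (hinfBot : ∀ i M, ∃ t, h' i t ≤ M) :
    ∃ xstar : Fin n → ℝ,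
      (∀ x : Fin n → ℝ, f xstar + ∑ i, h i (xstar i) ≤ f x + ∑ i, h i (x i)) ∧
      (∀ x : Fin n → ℝ, f x + ∑ i, h i (x i) = f xstar + ∑ i, h i (xstar i) → x = xstar) ∧
      ∀ j : Fin n,
        IsGreatest {lam : ℝ | ∃ S : Finset (Fin n), j ∈ S ∧
          ∀ T : Finset (Fin n),
            F S + ∑ i ∈ S, h' i lam ≤ F T + ∑ i ∈ T, h' i lam} (xstar j) := by
  have hmono : ∀ i, StrictMono (h' i) := fun i =>
    (hconv i).strictMono_of_hasDerivAt (hderiv i)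
  choose xs hxs using fun j =>
    exists_isGreatest_paramLevels (F := F) hcont (hmono j) (hsupTop j) (hinfBot j)
  have hy := neg_deriv_mem_basePolytope hF0 hF hmono hcont hxs
  have hfxs : f xs = ∑ i, -h' i (xs i) * xs i :=
    hf.eq_sum_mul hF0 hy.2 (sum_neg_deriv_levelSet_eq hF0 hF hmono hcont hxs)
  have hlt : ∀ x, x ≠ xs → f xs + ∑ i, h i (xs i) < f x + ∑ i, h i (x i) := fun x hne =>
    hf.add_sum_lt_of_ne hF0 hconv hderiv hy hfxs hne
  refine ⟨xs, fun x => ?_, fun x hx => ?_, hxs⟩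
  · rcases eq_or_ne x xs with rfl | hne
    exacts [le_rfl, (hlt x hne).le]
  · by_contra hne
    exact (hlt x hne).ne' hx
end

section
/- Let F and G be submodular functions on V with F(∅) = G(∅) = 0. Then F + G is submodular and its base polytope is the Minkowski sum of the individual base polytopes: B(F + G) = B(F) + B(G) = {y + z : y ∈ B(F), z ∈ B(G)}. -/
open Finset
open Finset

/-!
`B(F) + B(G) ⊆ B(F + G)` is immediate. For the converse, `B(F) + B(G)` is compact and convex,
so a point `w ∈ B(F + G)` outside it is strictly separated by a linear functional `c`. Order
`V` so that `c` increases along `σ`. Summation by parts against the prefix constraints shows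
that Edmonds' greedy vector `g_σ(H)`, obtained by telescoping `H` along the prefixes of `σ`,
minimizes `⟨·, c⟩` over `B(H)`; submodularity puts `g_σ(H)` in `B(H)`. As `g_σ` is additive
in `H`, `g_σ(F) + g_σ(G) = g_σ(F + G)` would have to be beaten by `w`, a contradiction.
-/

open Pointwise

lemma sum_range_mul_nonneg_of_sum_range_nonpos {a d : ℕ → ℝ} {n : ℕ}
    (ha : ∀ k, k + 1 < n → a k ≤ a (k + 1)) (hd : ∀ m < n, ∑ k ∈ range m, d k ≤ 0)
    (hdn : ∑ k ∈ range n, d k = 0) : 0 ≤ ∑ k ∈ range n, a k * d k := by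
  simp_rw [← smul_eq_mul]
  rw [sum_range_by_parts, hdn, smul_zero, zero_sub, neg_nonneg]
  refine sum_nonpos fun k hk => ?_
  have hk := mem_range.1 hk
  exact mul_nonpos_of_nonneg_of_nonpos (sub_nonneg.2 (ha k (by omega))) (hd _ (by omega))

section Greedy

variable {n : ℕ} (σ : Equiv.Perm (Fin n))

def prefixSet (m : ℕ) : Finset (Fin n) :=
  univ.filter fun i => (σ.symm i : ℕ) < m

lemma mem_prefixSet {m : ℕ} {i : Fin n} : i ∈ prefixSet σ m ↔ (σ.symm i : ℕ) < m := by
  simp [prefixSet]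

lemma prefixSet_zero : prefixSet σ 0 = ∅ := by
  ext i; simp [mem_prefixSet]

lemma prefixSet_of_le {m : ℕ} (hm : n ≤ m) : prefixSet σ m = univ := by
  ext i; simpa [mem_prefixSet] using (σ.symm i).isLt.trans_le hm

lemma prefixSet_succ_of_le {m : ℕ} (hm : n ≤ m) : prefixSet σ (m + 1) = prefixSet σ m := by
  rw [prefixSet_of_le σ hm, prefixSet_of_le σ (by omega)]

lemma apply_notMem_prefixSet {m : ℕ} (hm : m < n) : σ ⟨m, hm⟩ ∉ prefixSet σ m := by
  simp [mem_prefixSet]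

lemma prefixSet_succ {m : ℕ} (hm : m < n) :
    prefixSet σ (m + 1) = insert (σ ⟨m, hm⟩) (prefixSet σ m) := by
  ext i
  simp only [mem_prefixSet, mem_insert, ← Equiv.symm_apply_eq, Fin.ext_iff,
    Nat.lt_succ_iff_lt_or_eq]
  tauto

-- The values of `f` listed in the order `σ`, padded with zeros beyond `n`.
def orderedSeq (f : Fin n → ℝ) (k : ℕ) : ℝ :=
  if h : k < n then f (σ ⟨k, h⟩) else 0

lemma orderedSeq_mul (f g : Fin n → ℝ) (k : ℕ) :
    orderedSeq σ (f * g) k = orderedSeq σ f k * orderedSeq σ g k := by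
  unfold orderedSeq; split_ifs <;> simp

lemma sum_prefixSet_eq_sum_range (f : Fin n → ℝ) (m : ℕ) :
    ∑ i ∈ prefixSet σ m, f i = ∑ k ∈ range m, orderedSeq σ f k := by
  induction m with
  | zero => simp [prefixSet_zero]
  | succ m ih =>
    rw [sum_range_succ, ← ih, orderedSeq]
    by_cases hm : m < n
    · rw [dif_pos hm, prefixSet_succ σ hm, sum_insert (apply_notMem_prefixSet σ hm), add_comm]
    · rw [dif_neg hm, prefixSet_succ_of_le σ (not_lt.1 hm), add_zero]

lemma sum_univ_eq_sum_range_orderedSeq (f : Fin n → ℝ) :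
    ∑ i, f i = ∑ k ∈ range n, orderedSeq σ f k := by
  rw [← sum_prefixSet_eq_sum_range, prefixSet_of_le σ le_rfl]

lemma dotProduct_le_of_sum_prefixSet_le {u v c : Fin n → ℝ} (hc : Monotone (c ∘ σ))
    (hprefix : ∀ m, ∑ i ∈ prefixSet σ m, v i ≤ ∑ i ∈ prefixSet σ m, u i)
    (htotal : ∑ i, u i = ∑ i, v i) : u ⬝ᵥ c ≤ v ⬝ᵥ c := by
  have hmono (k : ℕ) (hk : k + 1 < n) : orderedSeq σ c k ≤ orderedSeq σ c (k + 1) := by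
    simpa [orderedSeq, dif_pos hk, dif_pos (k.lt_succ_self.trans hk)] using
      hc (show (⟨k, by omega⟩ : Fin n) ≤ ⟨k + 1, hk⟩ from Nat.le_succ k)
  have hpartial (m : ℕ) : ∑ k ∈ range m, orderedSeq σ (v - u) k ≤ 0 := by
    rw [← sum_prefixSet_eq_sum_range]
    simpa [sum_sub_distrib] using hprefix m
  have htotal' : ∑ k ∈ range n, orderedSeq σ (v - u) k = 0 := by
    rw [← sum_univ_eq_sum_range_orderedSeq]
    simp [sum_sub_distrib, htotal]
  have key := sum_range_mul_nonneg_of_sum_range_nonpos hmono (fun m _ => hpartial m) htotal'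
  have hdiff : v ⬝ᵥ c - u ⬝ᵥ c = ∑ i, ((v - u) * c) i := by
    simp [dotProduct, sub_mul, sum_sub_distrib]
  rw [sum_univ_eq_sum_range_orderedSeq σ] at hdiff
  simp only [orderedSeq_mul, mul_comm (orderedSeq σ (v - u) _)] at hdiff
  linarith

def greedyVector (H : Finset (Fin n) → ℝ) : Fin n → ℝ :=
  fun i => H (prefixSet σ (σ.symm i + 1)) - H (prefixSet σ (σ.symm i))

variable {σ} {H : Finset (Fin n) → ℝ}

lemma greedyVector_apply {m : ℕ} (hm : m < n) :
    greedyVector σ H (σ ⟨m, hm⟩) = H (prefixSet σ (m + 1)) - H (prefixSet σ m) := by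
  simp [greedyVector]

lemma greedyVector_add (F G : Finset (Fin n) → ℝ) :
    greedyVector σ (F + G) = greedyVector σ F + greedyVector σ G := by
  ext i; simp only [greedyVector, Pi.add_apply]; ring

lemma sum_prefixSet_greedyVector (hH0 : H ∅ = 0) (m : ℕ) :
    ∑ i ∈ prefixSet σ m, greedyVector σ H i = H (prefixSet σ m) := by
  induction m with
  | zero => simp [prefixSet_zero, hH0]
  | succ m ih =>
    by_cases hm : m < n
    · rw [prefixSet_succ σ hm, sum_insert (apply_notMem_prefixSet σ hm), ih, greedyVector_apply,
        prefixSet_succ σ hm, sub_add_cancel]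
    · rwa [prefixSet_succ_of_le σ (not_lt.1 hm)]

lemma sum_greedyVector (hH0 : H ∅ = 0) : ∑ i, greedyVector σ H i = H univ := by
  simpa [prefixSet_of_le σ le_rfl] using sum_prefixSet_greedyVector (σ := σ) hH0 n

lemma Submodular.sum_inter_prefixSet_greedyVector_le (hH : Submodular H) (hH0 : H ∅ = 0)
    (S : Finset (Fin n)) (m : ℕ) :
    ∑ i ∈ S ∩ prefixSet σ m, greedyVector σ H i ≤ H (S ∩ prefixSet σ m) := by
  induction m with
  | zero => simp [prefixSet_zero, hH0]
  | succ m ih =>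
    by_cases hm : m < n
    · by_cases hS : σ ⟨m, hm⟩ ∈ S
      · have hsub := hH (S ∩ prefixSet σ (m + 1)) (prefixSet σ m)
        have hnot := apply_notMem_prefixSet σ hm
        rw [prefixSet_succ σ hm] at hsub ⊢
        rw [inter_insert_of_mem hS] at hsub ⊢
        rw [sum_insert (fun h => hnot (mem_inter.1 h).2), greedyVector_apply, prefixSet_succ σ hm]
        have hunion : insert (σ ⟨m, hm⟩) (S ∩ prefixSet σ m) ∪ prefixSet σ m =
            insert (σ ⟨m, hm⟩) (prefixSet σ m) := by
          rw [insert_union, union_eq_right.2 inter_subset_right]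
        have hinter : insert (σ ⟨m, hm⟩) (S ∩ prefixSet σ m) ∩ prefixSet σ m =
            S ∩ prefixSet σ m := by
          rw [insert_inter_of_notMem hnot, inter_assoc, inter_self]
        rw [hunion, hinter] at hsub
        linarith
      · rwa [prefixSet_succ σ hm, inter_insert_of_notMem hS]
    · rwa [prefixSet_succ_of_le σ (not_lt.1 hm)]

variable (σ) in
lemma Submodular.greedyVector_mem_basePolytope (hH : Submodular H) (hH0 : H ∅ = 0) :
    greedyVector σ H ∈ basePolytope H :=
  ⟨fun S => by
    simpa [prefixSet_of_le σ le_rfl] using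
      hH.sum_inter_prefixSet_greedyVector_le (σ := σ) hH0 S n,
    sum_greedyVector hH0⟩

lemma greedyVector_dotProduct_le {c w : Fin n → ℝ} (hc : Monotone (c ∘ σ)) (hH0 : H ∅ = 0)
    (hw : w ∈ basePolytope H) : greedyVector σ H ⬝ᵥ c ≤ w ⬝ᵥ c :=
  dotProduct_le_of_sum_prefixSet_le σ hc
    (fun m => (hw.1 _).trans_eq (sum_prefixSet_greedyVector hH0 m).symm)
    (by rw [sum_greedyVector hH0, hw.2])

end Greedy

section BasePolytope

variable {n : ℕ} {F G : Finset (Fin n) → ℝ}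

lemma Submodular.add (hF : Submodular F) (hG : Submodular G) : Submodular (F + G) :=
  fun S T => by simp only [Pi.add_apply]; linarith [hF S T, hG S T]

lemma add_mem_basePolytope_add {y z : Fin n → ℝ} (hy : y ∈ basePolytope F)
    (hz : z ∈ basePolytope G) : y + z ∈ basePolytope (F + G) :=
  ⟨fun S => by simpa only [Pi.add_apply, sum_add_distrib] using add_le_add (hy.1 S) (hz.1 S),
    by simp only [Pi.add_apply, sum_add_distrib, hy.2, hz.2]⟩

lemma convex_basePolytope : Convex ℝ (basePolytope F) := by
  intro y hy z hz a b ha hb hab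
  simp only [basePolytope, Set.mem_ofPred_eq, Pi.add_apply, Pi.smul_apply, smul_eq_mul,
    sum_add_distrib, ← mul_sum, hy.2, hz.2, ← add_mul, hab, one_mul, and_true]
  exact fun S => calc
    _ ≤ a * F S + b * F S := by gcongr <;> [exact hy.1 S; exact hz.1 S]
    _ = F S := by rw [← add_mul, hab, one_mul]

lemma isClosed_basePolytope : IsClosed (basePolytope F) := by
  have hle : IsClosed {y : Fin n → ℝ | ∀ S, ∑ i ∈ S, y i ≤ F S} := by
    simp only [Set.ofPred_forall]
    exact isClosed_iInter fun S => isClosed_le (by fun_prop) continuous_const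
  exact hle.inter (isClosed_eq (by fun_prop) continuous_const)

lemma isCompact_basePolytope : IsCompact (basePolytope F) := by
  refine (isCompact_univ_pi fun i => isCompact_Icc (a := F univ - F (univ.erase i)) (b := F {i}))
    |>.of_isClosed_subset isClosed_basePolytope fun y hy i _ => ⟨?_, by simpa using hy.1 {i}⟩
  linarith [hy.1 (univ.erase i), hy.2, add_sum_erase univ y (mem_univ i)]

lemma basePolytope_add (hF : Submodular F) (hG : Submodular G) (hF0 : F ∅ = 0)
    (hG0 : G ∅ = 0) : basePolytope (F + G) = basePolytope F + basePolytope G := by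
  refine Set.Subset.antisymm (fun w hw => ?_) (Set.add_subset_iff.2 fun y hy z hz =>
    add_mem_basePolytope_add hy hz)
  by_contra hwM
  obtain ⟨f, u, hfw, hfM⟩ := geometric_hahn_banach_point_closed
    (convex_basePolytope.add convex_basePolytope)
    (isCompact_basePolytope.add isCompact_basePolytope).isClosed hwM
  set c : Fin n → ℝ := fun i => f fun j => if i = j then 1 else 0
  have hf (v : Fin n → ℝ) : f v = v ⬝ᵥ c := f.toLinearMap.pi_apply_eq_sum_univ v
  set σ := Tuple.sort c
  have hgreedy := greedyVector_dotProduct_le (σ := σ) (Tuple.monotone_sort c)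
    (by simp [hF0, hG0]) hw
  rw [greedyVector_add] at hgreedy
  have hM := hfM _ (Set.add_mem_add (hF.greedyVector_mem_basePolytope σ hF0)
    (hG.greedyVector_mem_basePolytope σ hG0))
  rw [hf] at hfw hM
  linarith

end BasePolytope

/-- the sum of two submodular functions is submodular, and the
base polytope of the sum is the Minkowski sum of the base polytopes. -/
theorem statement14 {n : ℕ} (F G : Finset (Fin n) → ℝ)
    (hF0 : F ∅ = 0) (hG0 : G ∅ = 0) (hF : Submodular F) (hG : Submodular G) :
    Submodular (fun S => F S + G S) ∧
    basePolytope (fun S => F S + G S) =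
      {w : Fin n → ℝ | ∃ y ∈ basePolytope F, ∃ z ∈ basePolytope G, w = y + z} := by
  refine ⟨hF.add hG, (basePolytope_add hF hG hF0 hG0).trans ?_⟩
  ext w
  simp only [Set.mem_add, Set.mem_ofPred_eq, eq_comm]
end

section
/- Let A and B be nonempty closed convex subsets of ℝ^n with A ∩ B ≠ ∅, and let T = (1/2)(R_A R_B + id). Then for any z_0 ∈ ℝ^n, the sequence defined by z_{k+1} = T(z_k) converges to a fixed point of T. -/
/-! Reflections in closed convex sets are nonexpansive, so `T = ½(R_A R_B + id)` is firmly
nonexpansive, `‖Tx - Ty‖² + ‖(x - Tx) - (y - Ty)‖² ≤ ‖x - y‖²`, and every point of `A ∩ B` is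
a fixed point of `T`. Hence the iterates are Fejér monotone with respect to the fixed points of
`T`, bounded, and `‖z_k - z_{k+1}‖ → 0`. By compactness of balls in `ℝⁿ` a subsequence
converges; its limit is a fixed point by continuity, and Fejér monotonicity upgrades
subsequential convergence to convergence of the whole sequence. -/

open Filter

/-- `P` is the (Euclidean) orthogonal projection onto `C`: it maps every point to
its nearest point of `C` in the Euclidean distance. -/
def IsEuclProjection {n : ℕ} (C : Set (Fin n → ℝ)) (P : (Fin n → ℝ) → (Fin n → ℝ)) : Prop :=
  ∀ x : Fin n → ℝ, P x ∈ C ∧ ∀ w ∈ C, ∑ i, (x i - P x i)^2 ≤ ∑ i, (x i - w i)^2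

open Function Topology

section NearestPoint

variable {F : Type*} [NormedAddCommGroup F]

def IsNearestPointMap (C : Set F) (P : F → F) : Prop :=
  ∀ x, P x ∈ C ∧ ∀ w ∈ C, ‖x - P x‖ ≤ ‖x - w‖

namespace IsNearestPointMap

variable {C : Set F} {P : F → F}

lemma apply_of_mem (hP : IsNearestPointMap C P) {x : F} (hx : x ∈ C) : P x = x := by
  have h := (hP x).2 x hx
  rw [sub_self, norm_zero, norm_le_zero_iff, sub_eq_zero] at h
  exact h.symm

variable [InnerProductSpace ℝ F]

lemma inner_sub_apply_nonpos (hP : IsNearestPointMap C P) (hC : Convex ℝ C) (x : F)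
    {w : F} (hw : w ∈ C) : inner ℝ (x - P x) (w - P x) ≤ 0 := by
  have : Nonempty C := ⟨⟨P x, (hP x).1⟩⟩
  have hbdd : BddBelow (Set.range fun w : C => ‖x - (w : F)‖) :=
    ⟨0, by rintro _ ⟨w, rfl⟩; exact norm_nonneg _⟩
  have hinf : ‖x - P x‖ = ⨅ w : C, ‖x - (w : F)‖ :=
    le_antisymm (le_ciInf fun w => (hP x).2 w w.2) (ciInf_le hbdd ⟨P x, (hP x).1⟩)
  exact (norm_eq_iInf_iff_real_inner_le_zero hC (hP x).1).mp hinf w hw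

lemma norm_sub_sq_le_inner (hP : IsNearestPointMap C P) (hC : Convex ℝ C) (x y : F) :
    ‖P x - P y‖ ^ 2 ≤ inner ℝ (x - y) (P x - P y) := by
  have hx := hP.inner_sub_apply_nonpos hC x (hP y).1
  have hy := hP.inner_sub_apply_nonpos hC y (hP x).1
  have hsum : inner ℝ (x - y) (P x - P y) - ‖P x - P y‖ ^ 2
      = -inner ℝ (x - P x) (P y - P x) - inner ℝ (y - P y) (P x - P y) := by
    rw [← real_inner_self_eq_norm_sq]
    simp only [inner_sub_left, inner_sub_right, real_inner_comm]
    ring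
  linarith

lemma lipschitzWith_reflection (hP : IsNearestPointMap C P) (hC : Convex ℝ C) :
    LipschitzWith 1 fun x => (2 : ℝ) • P x - x := by
  refine LipschitzWith.of_dist_le_mul fun x y => ?_
  rw [NNReal.coe_one, one_mul, dist_eq_norm, dist_eq_norm,
    ← sq_le_sq₀ (norm_nonneg _) (norm_nonneg _)]
  have hfirm := hP.norm_sub_sq_le_inner hC x y
  have hdiff : ((2 : ℝ) • P x - x) - ((2 : ℝ) • P y - y)
      = (2 : ℝ) • (P x - P y) - (x - y) := by module
  rw [hdiff, norm_sub_sq_real, norm_smul, real_inner_smul_left, real_inner_comm, Real.norm_two]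
  nlinarith

end IsNearestPointMap

end NearestPoint

section FejerMonotone

variable {X : Type*} [MetricSpace X] {T : X → X} {z : ℕ → X}

lemma antitone_dist_of_dist_apply_le {g : X} (hg : ∀ x, dist (T x) g ≤ dist x g)
    (hz : ∀ k, z (k + 1) = T (z k)) : Antitone fun k => dist (z k) g :=
  antitone_nat_of_succ_le fun k => hz k ▸ hg (z k)

lemma tendsto_of_antitone_dist_of_subseq {p : X} (hz : Antitone fun k => dist (z k) p)
    {φ : ℕ → ℕ} (hφ : StrictMono φ) (hzp : Tendsto (z ∘ φ) atTop (𝓝 p)) :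
    Tendsto z atTop (𝓝 p) := by
  rw [tendsto_iff_dist_tendsto_zero] at hzp ⊢
  exact (tendsto_iff_tendsto_subseq_of_antitone hz hφ.tendsto_atTop).mpr hzp

lemma exists_isFixedPt_tendsto_of_dist_apply_le [ProperSpace X] (hT : Continuous T) {f : X}
    (hf : IsFixedPt T f) (hfejer : ∀ g, IsFixedPt T g → ∀ x, dist (T x) g ≤ dist x g)
    (hz : ∀ k, z (k + 1) = T (z k))
    (hreg : Tendsto (fun k => dist (z k) (z (k + 1))) atTop (𝓝 0)) :
    ∃ p, IsFixedPt T p ∧ Tendsto z atTop (𝓝 p) := by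
  have hmono : ∀ g, IsFixedPt T g → Antitone fun k => dist (z k) g := fun g hg =>
    antitone_dist_of_dist_apply_le (hfejer g hg) hz
  obtain ⟨p, -, φ, hφ, hlim⟩ := (isCompact_closedBall f (dist (z 0) f)).tendsto_subseq
    fun k => Metric.mem_closedBall.mpr (hmono f hf (Nat.zero_le k))
  have hlim_succ : Tendsto (fun j => z (φ j + 1)) atTop (𝓝 p) :=
    hlim.congr_dist (hreg.comp hφ.tendsto_atTop)
  have hp : IsFixedPt T p := by
    refine tendsto_nhds_unique ((hT.tendsto p).comp hlim) ?_
    simpa only [Function.comp_def, hz] using hlim_succ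
  exact ⟨p, hp, tendsto_of_antitone_dist_of_subseq (hmono p hp) hφ hlim⟩

end FejerMonotone

section FirmlyNonexpansive

variable {E : Type*} [NormedAddCommGroup E]

/-- In a real inner product space this is equivalent to the usual
`‖T x - T y‖² ≤ ⟪x - y, T x - T y⟫`. -/
def IsFirmlyNonexpansive (T : E → E) : Prop :=
  ∀ x y, ‖T x - T y‖ ^ 2 + ‖(x - T x) - (y - T y)‖ ^ 2 ≤ ‖x - y‖ ^ 2

lemma isFirmlyNonexpansive_half_add_self [InnerProductSpace ℝ E] {N : E → E}
    (hN : LipschitzWith 1 N) : IsFirmlyNonexpansive fun x => (1 / 2 : ℝ) • (N x + x) := by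
  intro x y
  have hNxy : ‖N x - N y‖ ≤ ‖x - y‖ := by
    simpa [dist_eq_norm] using hN.dist_le_mul x y
  have hTxy : (1 / 2 : ℝ) • (N x + x) - (1 / 2 : ℝ) • (N y + y)
      = (1 / 2 : ℝ) • ((x - y) + (N x - N y)) := by module
  have hRxy : (x - (1 / 2 : ℝ) • (N x + x)) - (y - (1 / 2 : ℝ) • (N y + y))
      = (1 / 2 : ℝ) • ((x - y) - (N x - N y)) := by module
  have hpar := parallelogram_law_with_norm ℝ (x - y) (N x - N y)
  rw [hTxy, hRxy, norm_smul, norm_smul, Real.norm_eq_abs, abs_of_pos one_half_pos]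
  nlinarith [norm_nonneg (N x - N y), norm_nonneg (x - y)]

namespace IsFirmlyNonexpansive

variable {T : E → E}

lemma lipschitzWith (hT : IsFirmlyNonexpansive T) : LipschitzWith 1 T := by
  refine LipschitzWith.of_dist_le_mul fun x y => ?_
  rw [NNReal.coe_one, one_mul, dist_eq_norm, dist_eq_norm,
    ← sq_le_sq₀ (norm_nonneg _) (norm_nonneg _)]
  nlinarith [hT x y, sq_nonneg ‖(x - T x) - (y - T y)‖]

lemma norm_sub_sq_add_le (hT : IsFirmlyNonexpansive T) {g : E} (hg : IsFixedPt T g) (x : E) :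
    ‖T x - g‖ ^ 2 + ‖x - T x‖ ^ 2 ≤ ‖x - g‖ ^ 2 := by
  simpa [hg.eq] using hT x g

lemma dist_apply_le (hT : IsFirmlyNonexpansive T) {g : E} (hg : IsFixedPt T g) (x : E) :
    dist (T x) g ≤ dist x g := by
  simpa [hg.eq] using hT.lipschitzWith.dist_le_mul x g

lemma tendsto_dist_succ (hT : IsFirmlyNonexpansive T) {f : E} (hf : IsFixedPt T f)
    {z : ℕ → E} (hz : ∀ k, z (k + 1) = T (z k)) :
    Tendsto (fun k => dist (z k) (z (k + 1))) atTop (𝓝 0) := by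
  set d := fun k => dist (z k) f
  have hd : Tendsto d atTop (𝓝 (⨅ k, d k)) :=
    tendsto_atTop_ciInf (antitone_dist_of_dist_apply_le (hT.dist_apply_le hf) hz)
      ⟨0, by rintro _ ⟨k, rfl⟩; exact dist_nonneg⟩
  have hgap : Tendsto (fun k => d k ^ 2 - d (k + 1) ^ 2) atTop (𝓝 0) := by
    simpa using (hd.pow 2).sub ((hd.pow 2).comp (tendsto_add_atTop_nat 1))
  have hstep : ∀ k, dist (z k) (z (k + 1)) ^ 2 ≤ d k ^ 2 - d (k + 1) ^ 2 := fun k => by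
    have h := hT.norm_sub_sq_add_le hf (z k)
    simp only [d, dist_eq_norm, hz]
    linarith
  simpa [Real.sqrt_sq dist_nonneg] using
    (squeeze_zero (fun _ => sq_nonneg _) hstep hgap).sqrt

lemma exists_isFixedPt_tendsto [ProperSpace E] (hT : IsFirmlyNonexpansive T) {f : E}
    (hf : IsFixedPt T f) {z : ℕ → E} (hz : ∀ k, z (k + 1) = T (z k)) :
    ∃ p, IsFixedPt T p ∧ Tendsto z atTop (𝓝 p) :=
  exists_isFixedPt_tendsto_of_dist_apply_le hT.lipschitzWith.continuous hf
    (fun _ hg => hT.dist_apply_le hg) hz (hT.tendsto_dist_succ hf hz)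

end IsFirmlyNonexpansive

end FirmlyNonexpansive

/-- `Fin n → ℝ` carries the sup norm, so the argument runs in `EuclideanSpace ℝ (Fin n)`. -/
lemma IsEuclProjection.isNearestPointMap {n : ℕ} {C : Set (Fin n → ℝ)}
    {P : (Fin n → ℝ) → (Fin n → ℝ)} (hP : IsEuclProjection C P) :
    IsNearestPointMap (WithLp.ofLp ⁻¹' C : Set (EuclideanSpace ℝ (Fin n)))
      fun x => WithLp.toLp 2 (P (WithLp.ofLp x)) := by
  intro x
  refine ⟨(hP x.ofLp).1, fun w hw => ?_⟩
  rw [← sq_le_sq₀ (norm_nonneg _) (norm_nonneg _), EuclideanSpace.real_norm_sq_eq,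
    EuclideanSpace.real_norm_sq_eq]
  exact (hP x.ofLp).2 w.ofLp hw

theorem statement15_general {n : ℕ} (A B : Set (Fin n → ℝ))
    (hAcv : Convex ℝ A) (hBcv : Convex ℝ B)
    (hAB : (A ∩ B).Nonempty)
    (PA PB : (Fin n → ℝ) → (Fin n → ℝ))
    (hPA : IsEuclProjection A PA) (hPB : IsEuclProjection B PB)
    (z : ℕ → Fin n → ℝ)
    (hz : ∀ k, z (k+1) = (1/2 : ℝ) •
      ((((2:ℝ) • PA ((2:ℝ) • PB (z k) - z k) - ((2:ℝ) • PB (z k) - z k))) + z k)) :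
    ∃ zstar : Fin n → ℝ,
      (1/2 : ℝ) •
        ((((2:ℝ) • PA ((2:ℝ) • PB zstar - zstar) - ((2:ℝ) • PB zstar - zstar))) + zstar)
        = zstar ∧
      Tendsto z atTop (nhds zstar) := by
  have hRA := hPA.isNearestPointMap.lipschitzWith_reflection
    (hAcv.linear_preimage (WithLp.linearEquiv 2 ℝ (Fin n → ℝ)).toLinearMap)
  have hRB := hPB.isNearestPointMap.lipschitzWith_reflection
    (hBcv.linear_preimage (WithLp.linearEquiv 2 ℝ (Fin n → ℝ)).toLinearMap)
  have hT := isFirmlyNonexpansive_half_add_self (mul_one (1 : NNReal) ▸ hRA.comp hRB)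
  obtain ⟨f, hfA, hfB⟩ := hAB
  have hPAf := hPA.isNearestPointMap.apply_of_mem (x := WithLp.toLp 2 f) hfA
  have hPBf := hPB.isNearestPointMap.apply_of_mem (x := WithLp.toLp 2 f) hfB
  obtain ⟨p, hp, hlim⟩ := hT.exists_isFixedPt_tendsto (f := WithLp.toLp 2 f)
    (by simp only [IsFixedPt, comp_apply, hPBf, two_smul, add_sub_cancel_right, hPAf]; module)
    (z := fun k => WithLp.toLp 2 (z k)) fun k => congrArg (WithLp.toLp 2) (hz k)
  exact ⟨p.ofLp, congrArg WithLp.ofLp hp, ((PiLp.continuous_ofLp 2 _).tendsto p).comp hlim⟩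

/-- convergence of Douglas–Rachford iterations in the consistent
case: for nonempty closed convex `A, B ⊆ ℝ^n` with `A ∩ B ≠ ∅` and
`T = ½(R_A R_B + id)`, the iteration `z_{k+1} = T(z_k)` converges to a fixed point
of `T`, for every starting point `z_0`. -/
theorem statement15 {n : ℕ} (A B : Set (Fin n → ℝ))
    (hAne : A.Nonempty) (hBne : B.Nonempty)
    (hAcl : IsClosed A) (hBcl : IsClosed B)
    (hAcv : Convex ℝ A) (hBcv : Convex ℝ B)
    (hAB : (A ∩ B).Nonempty)
    (PA PB : (Fin n → ℝ) → (Fin n → ℝ))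
    (hPA : IsEuclProjection A PA) (hPB : IsEuclProjection B PB)
    (z : ℕ → Fin n → ℝ)
    (hz : ∀ k, z (k+1) = (1/2 : ℝ) •
      ((((2:ℝ) • PA ((2:ℝ) • PB (z k) - z k) - ((2:ℝ) • PB (z k) - z k))) + z k)) :
    ∃ zstar : Fin n → ℝ,
      (1/2 : ℝ) •
        ((((2:ℝ) • PA ((2:ℝ) • PB zstar - zstar) - ((2:ℝ) • PB zstar - zstar))) + zstar)
        = zstar ∧
      Tendsto z atTop (nhds zstar) :=
  statement15_general A B hAcv hBcv hAB PA PB hPA hPB z hz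
end

section
/- Let A and B be nonempty polyhedral convex subsets of ℝ^n with A ∩ B = ∅, and let T = (1/2)(R_A R_B + id). Then for any z_0 ∈ ℝ^n, the sequence defined by z_{k+1} = T(z_k) satisfies ‖z_k‖ → ∞ as k → ∞. -/
open Filter

/-- A polyhedral convex set: an intersection of finitely many closed halfspaces. -/
def Polyhedral {n : ℕ} (C : Set (Fin n → ℝ)) : Prop :=
  ∃ (m : ℕ) (a : Fin m → Fin n → ℝ) (b : Fin m → ℝ),
    C = {x : Fin n → ℝ | ∀ i, ∑ j, a i j * x j ≤ b i}

/-!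
Each Douglas–Rachford step moves `z` by `P_A(R_B z) - P_B z ∈ A - B`. For polyhedral `A` and `B`
the difference set `A - B` is again polyhedral (Fourier–Motzkin elimination), hence closed and
convex, and it misses `0` because `A ∩ B = ∅`. A functional `f` strictly separating `0` from
`A - B` therefore grows by at least a fixed `u > 0` at every step, so `f (z k) → ∞` and with it
`‖z k‖ → ∞`.
-/

open Pointwise

theorem Set.Finite.exists_le_le_of_forall_le {α : Type*} [LinearOrder α] [Nonempty α]
    {s t : Set α} (hs : s.Finite) (ht : t.Finite) (hst : ∀ a ∈ s, ∀ b ∈ t, a ≤ b) :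
    ∃ c, (∀ a ∈ s, a ≤ c) ∧ ∀ b ∈ t, c ≤ b := by
  rcases s.eq_empty_or_nonempty with rfl | hne
  · obtain ⟨c, hc⟩ := ht.bddBelow
    exact ⟨c, by simp, hc⟩
  · obtain ⟨c, hc, hmax⟩ := s.exists_max_image id hs hne
    exact ⟨c, hmax, hst c hc⟩

theorem exists_forall_mul_le_iff {ι : Type*} {S : Set ι} (hS : S.Finite) (a c : ι → ℝ) :
    (∃ t : ℝ, ∀ i ∈ S, t * c i ≤ a i) ↔
      (∀ i ∈ S, c i = 0 → 0 ≤ a i) ∧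
        ∀ i ∈ S, ∀ j ∈ S, c i < 0 → 0 < c j → c i * a j ≤ c j * a i := by
  constructor
  · rintro ⟨t, ht⟩
    refine ⟨fun i hi hci => by simpa [hci] using ht i hi, fun i hi j hj hci hcj => ?_⟩
    nlinarith [mul_le_mul_of_nonneg_left (ht i hi) hcj.le,
      mul_le_mul_of_nonpos_left (ht j hj) hci.le]
  · rintro ⟨hzero, hpair⟩
    obtain ⟨t, hlower, hupper⟩ := Set.Finite.exists_le_le_of_forall_le
      ((hS.subset (Set.sep_subset S fun i => c i < 0)).image fun i => a i / c i)
      ((hS.subset (Set.sep_subset S fun j => 0 < c j)).image fun j => a j / c j) (by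
        rintro _ ⟨i, ⟨hi, hci⟩, rfl⟩ _ ⟨j, ⟨hj, hcj⟩, rfl⟩
        rw [div_le_iff_of_neg hci, div_mul_eq_mul_div, div_le_iff₀ hcj]
        linarith [hpair i hi j hj hci hcj])
    refine ⟨t, fun i hi => ?_⟩
    rcases lt_trichotomy (c i) 0 with hci | hci | hci
    · exact (div_le_iff_of_neg hci).1 (hlower _ ⟨i, ⟨hi, hci⟩, rfl⟩)
    · simpa [hci] using hzero i hi hci
    · exact (le_div_iff₀ hci).1 (hupper _ ⟨i, ⟨hi, hci⟩, rfl⟩)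

section Algebraic

variable {E F : Type*} [AddCommGroup E] [Module ℝ E] [AddCommGroup F] [Module ℝ F]

def IsPolyhedron (P : Set E) : Prop :=
  ∃ s : Set ((E →ₗ[ℝ] ℝ) × ℝ), s.Finite ∧ P = {x | ∀ p ∈ s, p.1 x ≤ p.2}

theorem isPolyhedron_of_finite {ι : Type*} {S : Set ι} (hS : S.Finite) (f : ι → E →ₗ[ℝ] ℝ)
    (b : ι → ℝ) : IsPolyhedron {x | ∀ i ∈ S, f i x ≤ b i} :=
  ⟨(fun i => (f i, b i)) '' S, hS.image _, by simp⟩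

namespace IsPolyhedron

theorem preimage {P : Set E} (hP : IsPolyhedron P) (L : F →ₗ[ℝ] E) : IsPolyhedron (L ⁻¹' P) := by
  obtain ⟨s, hs, rfl⟩ := hP
  exact isPolyhedron_of_finite hs (fun p => p.1 ∘ₗ L) Prod.snd

theorem inter {P Q : Set E} (hP : IsPolyhedron P) (hQ : IsPolyhedron Q) :
    IsPolyhedron (P ∩ Q) := by
  obtain ⟨s, hs, rfl⟩ := hP
  obtain ⟨t, ht, rfl⟩ := hQ
  exact ⟨s ∪ t, hs.union ht, by ext; simp [or_imp, forall_and]⟩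

theorem convex {P : Set E} (hP : IsPolyhedron P) : Convex ℝ P := by
  obtain ⟨s, -, rfl⟩ := hP
  simp only [Set.ofPred_forall]
  exact convex_iInter fun p => convex_iInter fun _ => convex_halfSpace_le p.1.isLinear _

theorem setOf_exists_add_smul_mem {P : Set E} (hP : IsPolyhedron P) (u : E) :
    IsPolyhedron {x | ∃ t : ℝ, x + t • u ∈ P} := by
  obtain ⟨s, hs, rfl⟩ := hP
  have hmem : ∀ (x : E) (t : ℝ), x + t • u ∈ {x | ∀ p ∈ s, p.1 x ≤ p.2} ↔
      ∀ p ∈ s, t * p.1 u ≤ p.2 - p.1 x := fun x t => by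
    simp only [Set.mem_ofPred_eq, map_add, map_smul, smul_eq_mul, le_sub_iff_add_le']
  have hcross : ∀ (x : E) (f g : E →ₗ[ℝ] ℝ) (b c : ℝ),
      f u * (c - g x) ≤ g u * (b - f x) ↔ (g u • f - f u • g) x ≤ g u * b - f u * c := by
    intro x f g b c
    simp only [LinearMap.sub_apply, LinearMap.smul_apply, smul_eq_mul]
    constructor <;> intro h <;> linarith
  have key : {x | ∃ t : ℝ, x + t • u ∈ {x | ∀ p ∈ s, p.1 x ≤ p.2}} =
      {x | ∀ p ∈ {p ∈ s | p.1 u = 0}, p.1 x ≤ p.2} ∩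
      {x | ∀ pq ∈ {pq ∈ s ×ˢ s | pq.1.1 u < 0 ∧ 0 < pq.2.1 u},
        (pq.2.1 u • pq.1.1 - pq.1.1 u • pq.2.1) x ≤ pq.2.1 u * pq.1.2 - pq.1.1 u * pq.2.2} := by
    ext x
    rw [Set.mem_ofPred_eq]
    simp_rw [hmem]
    rw [exists_forall_mul_le_iff hs]
    simp only [Set.mem_inter_iff, Set.mem_ofPred_eq, Set.mem_prod, and_imp, Prod.forall,
      sub_nonneg, hcross]
    exact and_congr Iff.rfl ⟨fun h f b g c hf hg => h f b hf g c hg,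
      fun h f b hf g c hg => h f b g c hf hg⟩
  rw [key]
  exact (isPolyhedron_of_finite (hs.subset (Set.sep_subset _ _)) _ _).inter
    (isPolyhedron_of_finite ((hs.prod hs).subset (Set.sep_subset _ _)) _ _)

theorem setOf_exists_add_mem {P : Set E} (hP : IsPolyhedron P) {V : Submodule ℝ E}
    (hV : V.FG) : IsPolyhedron {x | ∃ v ∈ V, x + v ∈ P} := by
  classical
  obtain ⟨s, rfl⟩ := hV
  induction s using Finset.induction_on with
  | empty => simpa [Submodule.span_empty] using hP
  | insert u s _ ih =>
    convert ih.setOf_exists_add_smul_mem u using 1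
    ext x
    simp only [Finset.coe_insert, Submodule.mem_span_insert, Set.mem_ofPred_eq]
    constructor
    · rintro ⟨_, ⟨t, v, hv, rfl⟩, hx⟩
      exact ⟨t, v, hv, by convert hx using 1; abel⟩
    · rintro ⟨t, v, hv, hx⟩
      exact ⟨t • u + v, ⟨t, v, hv, rfl⟩, by convert hx using 1; abel⟩

/-- `A - B` is the slice `{(x, 0)}` of `A × (-B)` shifted along the antidiagonal `{(w, -w)}`. -/
theorem sub [FiniteDimensional ℝ E] {A B : Set E} (hA : IsPolyhedron A) (hB : IsPolyhedron B) :
    IsPolyhedron (A - B) := by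
  let S : Set (E × E) := LinearMap.fst ℝ E E ⁻¹' A ∩ (-LinearMap.snd ℝ E E) ⁻¹' B
  let V := LinearMap.range ((LinearMap.id : E →ₗ[ℝ] E).prod (-LinearMap.id))
  have hS : IsPolyhedron S := (hA.preimage _).inter (hB.preimage _)
  convert (hS.setOf_exists_add_mem (IsNoetherian.noetherian V)).preimage
    (LinearMap.inl ℝ E E) using 1
  ext x
  constructor
  · rintro ⟨a, ha, b, hb, rfl⟩
    exact ⟨(b, -b), ⟨b, rfl⟩, by simpa using ha, by simpa using hb⟩
  · rintro ⟨_, ⟨w, rfl⟩, hxw, hw⟩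
    exact ⟨x + w, by simpa using hxw, w, by simpa using hw, add_sub_cancel_right x w⟩

end IsPolyhedron

end Algebraic

theorem IsPolyhedron.isClosed {E : Type*} [NormedAddCommGroup E] [NormedSpace ℝ E]
    [FiniteDimensional ℝ E] {P : Set E} (hP : IsPolyhedron P) : IsClosed P := by
  obtain ⟨s, -, rfl⟩ := hP
  simp only [Set.ofPred_forall]
  exact isClosed_iInter fun p => isClosed_iInter fun _ =>
    isClosed_le p.1.continuous_of_finiteDimensional continuous_const

theorem Polyhedral.isPolyhedron {n : ℕ} {C : Set (Fin n → ℝ)} (hC : Polyhedral C) :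
    IsPolyhedron C := by
  obtain ⟨m, a, b, rfl⟩ := hC
  convert isPolyhedron_of_finite Set.finite_univ (fun i => Fintype.linearCombination ℝ (a i)) b
  simp [Fintype.linearCombination_apply, mul_comm]

section Divergence

variable {E : Type*} [NormedAddCommGroup E] [NormedSpace ℝ E]

theorem tendsto_norm_atTop_of_tendsto_apply {α : Type*} {l : Filter α} (f : StrongDual ℝ E)
    {z : α → E} (h : Tendsto (fun k => f (z k)) l atTop) : Tendsto (fun k => ‖z k‖) l atTop := by
  refine tendsto_atTop_mono (fun k => ?_) (h.atTop_div_const (by positivity : 0 < ‖f‖ + 1))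
  rw [div_le_iff₀ (by positivity)]
  calc f (z k) ≤ ‖f‖ * ‖z k‖ := (le_abs_self _).trans (f.le_opNorm _)
    _ ≤ ‖z k‖ * (‖f‖ + 1) := by nlinarith [norm_nonneg (z k)]

theorem tendsto_norm_atTop_of_forall_sub_mem {D : Set E} (hDconv : Convex ℝ D)
    (hDclosed : IsClosed D) (hD0 : (0 : E) ∉ D) {z : ℕ → E} (hz : ∀ k, z (k + 1) - z k ∈ D) :
    Tendsto (fun k => ‖z k‖) atTop atTop := by
  obtain ⟨f, u, hf0, hfD⟩ := geometric_hahn_banach_point_closed hDconv hDclosed hD0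
  rw [map_zero] at hf0
  have hgrowth : ∀ k : ℕ, f (z 0) + k * u ≤ f (z k) := by
    intro k
    induction k with
    | zero => simp
    | succ k ih =>
      have := hfD _ (hz k)
      rw [map_sub] at this
      push_cast
      linarith
  refine tendsto_norm_atTop_of_tendsto_apply f (tendsto_atTop_mono hgrowth ?_)
  exact tendsto_atTop_add_const_left _ _ (tendsto_natCast_atTop_atTop.atTop_mul_const hf0)

end Divergence

theorem norm_le_sqrt_sum_sq {ι : Type*} [Fintype ι] (x : ι → ℝ) : ‖x‖ ≤ √(∑ i, x i ^ 2) :=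
  (pi_norm_le_iff_of_nonneg (Real.sqrt_nonneg _)).2 fun i =>
    Real.abs_le_sqrt (Finset.single_le_sum (fun j _ => sq_nonneg (x j)) (Finset.mem_univ i))

theorem statement16_general {n : ℕ} (A B : Set (Fin n → ℝ))
    (hApoly : Polyhedral A) (hBpoly : Polyhedral B)
    (hAB : A ∩ B = ∅)
    (PA PB : (Fin n → ℝ) → (Fin n → ℝ))
    (hPA : IsEuclProjection A PA) (hPB : IsEuclProjection B PB)
    (z : ℕ → Fin n → ℝ)
    (hz : ∀ k, z (k+1) = (1/2 : ℝ) •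
      ((((2:ℝ) • PA ((2:ℝ) • PB (z k) - z k) - ((2:ℝ) • PB (z k) - z k))) + z k)) :
    Tendsto (fun k => Real.sqrt (∑ i, (z k i)^2)) atTop atTop := by
  have hD : IsPolyhedron (A - B) := hApoly.isPolyhedron.sub hBpoly.isPolyhedron
  have hD0 : (0 : Fin n → ℝ) ∉ A - B := by
    rw [Set.zero_mem_sub_iff, not_not, Set.disjoint_iff_inter_eq_empty]
    exact hAB
  have hstep : ∀ k, z (k + 1) - z k ∈ A - B := fun k =>
    Set.mem_sub.2 ⟨_, (hPA _).1, _, (hPB (z k)).1, by rw [hz k]; module⟩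
  exact tendsto_atTop_mono (fun k => norm_le_sqrt_sum_sq (z k))
    (tendsto_norm_atTop_of_forall_sub_mem hD.convex hD.isClosed hD0 hstep)

/-- divergence of Douglas–Rachford iterations in the
inconsistent case, Bauschke–Combettes–Luke: for nonempty polyhedral convex
`A, B ⊆ ℝ^n` with `A ∩ B = ∅` and `T = ½(R_A R_B + id)`, the iterates
`z_{k+1} = T(z_k)` satisfy `‖z_k‖ → ∞`. -/
theorem statement16 {n : ℕ} (A B : Set (Fin n → ℝ))
    (hApoly : Polyhedral A) (hBpoly : Polyhedral B)
    (hAne : A.Nonempty) (hBne : B.Nonempty)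
    (hAB : A ∩ B = ∅)
    (PA PB : (Fin n → ℝ) → (Fin n → ℝ))
    (hPA : IsEuclProjection A PA) (hPB : IsEuclProjection B PB)
    (z : ℕ → Fin n → ℝ)
    (hz : ∀ k, z (k+1) = (1/2 : ℝ) •
      ((((2:ℝ) • PA ((2:ℝ) • PB (z k) - z k) - ((2:ℝ) • PB (z k) - z k))) + z k)) :
    Tendsto (fun k => Real.sqrt (∑ i, (z k i)^2)) atTop atTop :=
  statement16_general A B hApoly hBpoly hAB PA PB hPA hPB z hz
end
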